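/- Let D be an n×n matrix over F_2 and f : F_2^n → {-1,1} boolean. Define F : F_2^n → ℝ by F(z) = Σ_y f̂_y^2(Dy + z). Then the Fourier coefficient of F at x equals f̂_x^2(D^T x). In particular F̂ is nonnegative everywhere, so F attains its maximum at z = 0. -/
import Mathlib


open Finset

/-- The character `(-1)^{⟨α,x⟩}` on `F_2^n`. -/
noncomputable def chi {n : ℕ} (α x : Fin n → ZMod 2) : ℝ :=
  (-1 : ℝ) ^ ((∑ i, α i * x i : ZMod 2)).val

/-- Fourier coefficient `f̂(α) = E_x f(x)(-1)^{⟨α,x⟩}`. -/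
noncomputable def fCoeff {n : ℕ} (f : (Fin n → ZMod 2) → ℝ) (α : Fin n → ZMod 2) : ℝ :=
  (∑ x, f x * chi α x) / 2 ^ n

/-- Discrete derivative `f_y(x) = f(x) f(x+y)`. -/
noncomputable def dderiv {n : ℕ} (f : (Fin n → ZMod 2) → ℝ) (y : Fin n → ZMod 2) :
    (Fin n → ZMod 2) → ℝ := fun x => f x * f (x + y)

/-- `‖f‖_{U_d}^{2^d} = E_{x,y_1,…,y_d} ∏_{S ⊆ [d]} f(x + Σ_{i∈S} y_i)`. -/
noncomputable def gowersPow {n : ℕ} (d : ℕ) (f : (Fin n → ZMod 2) → ℝ) : ℝ :=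
  (∑ x : Fin n → ZMod 2, ∑ y : Fin d → Fin n → ZMod 2,
      ∏ S : Finset (Fin d), f (x + ∑ i ∈ S, y i)) / ((2 : ℝ) ^ n) ^ (d + 1)

/-- The Gowers uniformity norm `‖f‖_{U_d}`. -/
noncomputable def gowersNorm {n : ℕ} (d : ℕ) (f : (Fin n → ZMod 2) → ℝ) : ℝ :=
  gowersPow d f ^ ((1 : ℝ) / 2 ^ d)

section FourierAux
variable {n : ℕ}

private lemma eps_add (a b : ZMod 2) :
    (-1:ℝ) ^ (a+b).val = (-1:ℝ) ^ a.val * (-1:ℝ) ^ b.val := by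
  rw [ZMod.val_add, ← neg_one_pow_eq_pow_mod_two, pow_add]

private lemma vadd_self (v : Fin n → ZMod 2) : v + v = 0 := by
  funext i
  have h : ∀ a : ZMod 2, a + a = 0 := by decide
  exact h (v i)

private lemma vadd_eq_zero_iff (u v : Fin n → ZMod 2) : u + v = 0 ↔ u = v := by
  constructor
  · intro h
    have h2 := congrArg (· + v) h
    simpa [add_assoc, vadd_self] using h2
  · rintro rfl; exact vadd_self _

private lemma chi_comm (α x : Fin n → ZMod 2) : chi α x = chi x α := by
  unfold chi
  congr 2
  exact Finset.sum_congr rfl fun i _ => mul_comm _ _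

private lemma chi_add_right (α x y : Fin n → ZMod 2) :
    chi α (x + y) = chi α x * chi α y := by
  unfold chi
  rw [← eps_add]
  congr 2
  simp [mul_add, Finset.sum_add_distrib]

private lemma chi_add_left (α β x : Fin n → ZMod 2) :
    chi (α + β) x = chi α x * chi β x := by
  rw [chi_comm, chi_add_right, chi_comm x α, chi_comm x β]

private lemma chi_zero_right (α : Fin n → ZMod 2) : chi α 0 = 1 := by
  simp [chi]

private lemma chi_zero_left (x : Fin n → ZMod 2) : chi 0 x = 1 := by
  simp [chi]

private lemma chi_le_one (α x : Fin n → ZMod 2) : chi α x ≤ 1 := by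
  unfold chi
  rcases Nat.even_or_odd ((∑ i, α i * x i : ZMod 2)).val with h | h
  · rw [h.neg_one_pow]
  · rw [h.neg_one_pow]; norm_num

private lemma sum_chi (α : Fin n → ZMod 2) :
    ∑ x : Fin n → ZMod 2, chi α x = if α = 0 then (2:ℝ)^n else 0 := by
  split_ifs with h
  · subst h
    simp [chi_zero_left, Finset.card_univ]
  · obtain ⟨i, hi⟩ : ∃ i, α i ≠ 0 := by
      by_contra hc; push_neg at hc; exact h (funext hc)
    have hone : ∀ a : ZMod 2, a ≠ 0 → a = 1 := by decide
    have hchi : chi α ((Pi.single i 1 : Fin n → ZMod 2)) = -1 := by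
      unfold chi
      have hs : (∑ j, α j * (Pi.single i 1 : Fin n → ZMod 2) j) = α i := by
        simp [Pi.single_apply, mul_ite, Finset.sum_ite_eq']
      rw [hs, hone _ hi]
      norm_num [ZMod.val_one]
    have h1 : ∑ x : Fin n → ZMod 2, chi α (x + (Pi.single i 1 : Fin n → ZMod 2))
        = ∑ x : Fin n → ZMod 2, chi α x :=
      Fintype.sum_equiv (Equiv.addRight ((Pi.single i 1 : Fin n → ZMod 2))) _ _ (fun x => rfl)
    have h2 : ∑ x : Fin n → ZMod 2, chi α (x + (Pi.single i 1 : Fin n → ZMod 2))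
        = -∑ x : Fin n → ZMod 2, chi α x := by
      simp [chi_add_right, hchi]
    linarith

private lemma sum_chi_right (c : Fin n → ZMod 2) :
    ∑ x : Fin n → ZMod 2, chi x c = if c = 0 then (2:ℝ)^n else 0 := by
  rw [show (∑ x : Fin n → ZMod 2, chi x c) = ∑ x : Fin n → ZMod 2, chi c x from
    Finset.sum_congr rfl fun x _ => chi_comm x c, sum_chi]

private lemma fourier_inversion (g : (Fin n → ZMod 2) → ℝ) (z : Fin n → ZMod 2) :
    ∑ x : Fin n → ZMod 2, fCoeff g x * chi x z = g z := by
  have step : ∀ x, fCoeff g x * chi x z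
      = (∑ w, g w * chi (w + z) x) / 2^n := by
    intro x
    rw [fCoeff, div_mul_eq_mul_div, Finset.sum_mul]
    congr 1
    refine Finset.sum_congr rfl fun w _ => ?_
    rw [chi_add_left, chi_comm w x, chi_comm z x]
    ring
  simp only [step]
  rw [← Finset.sum_div, Finset.sum_comm]
  have hw : ∀ w, ∑ x : Fin n → ZMod 2, g w * chi (w + z) x
      = if w = z then g w * 2^n else 0 := by
    intro w
    rw [← Finset.mul_sum, sum_chi]
    simp only [vadd_eq_zero_iff]
    split_ifs <;> simp
  simp only [hw]
  rw [Finset.sum_ite_eq' Finset.univ z (fun w => g w * 2^n)]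
  simp

private lemma sum_coeff_sq_mul_chi (g : (Fin n → ZMod 2) → ℝ) (x : Fin n → ZMod 2) :
    ∑ w : Fin n → ZMod 2, fCoeff g w ^ 2 * chi x w
      = (∑ a : Fin n → ZMod 2, g a * g (a + x)) / 2^n := by
  have expand : ∀ w : Fin n → ZMod 2, fCoeff g w ^ 2 * chi x w
      = ∑ a : Fin n → ZMod 2, ∑ b : Fin n → ZMod 2,
          (g a * g b / ((2:ℝ)^n * 2^n)) * chi (a + b + x) w := by
    intro w
    rw [sq, fCoeff, div_mul_div_comm, div_mul_eq_mul_div, Finset.sum_mul_sum,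
      Finset.sum_mul, Finset.sum_div]
    refine Finset.sum_congr rfl fun a _ => ?_
    rw [Finset.sum_mul, Finset.sum_div]
    refine Finset.sum_congr rfl fun b _ => ?_
    rw [chi_add_left, chi_add_left, chi_comm a w, chi_comm b w, chi_comm x w]
    ring
  simp only [expand]
  rw [Finset.sum_comm]
  have hswap : ∀ a : Fin n → ZMod 2,
      (∑ w : Fin n → ZMod 2, ∑ b : Fin n → ZMod 2,
        (g a * g b / ((2:ℝ)^n * 2^n)) * chi (a + b + x) w)
      = (g a * g (a + x) / ((2:ℝ)^n * 2^n)) * 2^n := by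
    intro a
    rw [Finset.sum_comm]
    have hb : ∀ b : Fin n → ZMod 2,
        (∑ w : Fin n → ZMod 2, (g a * g b / ((2:ℝ)^n * 2^n)) * chi (a + b + x) w)
        = if b = a + x then (g a * g b / ((2:ℝ)^n * 2^n)) * 2^n else 0 := by
      intro b
      rw [← Finset.mul_sum, sum_chi,
        show a + b + x = b + (a + x) from by ring]
      simp only [vadd_eq_zero_iff]
      split_ifs <;> simp
    simp only [hb]
    rw [Finset.sum_ite_eq' Finset.univ (a + x)
      (fun b => (g a * g b / ((2:ℝ)^n * 2^n)) * 2^n)]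
    simp
  simp only [hswap]
  rw [Finset.sum_div]
  refine Finset.sum_congr rfl fun a _ => ?_
  have h2 : ((2:ℝ)^n) ≠ 0 := by positivity
  field_simp

private lemma chi_mulVec (x v : Fin n → ZMod 2) (D : Matrix (Fin n) (Fin n) (ZMod 2)) :
    chi x (D.mulVec v) = chi (D.transpose.mulVec x) v := by
  unfold chi
  congr 2
  calc (∑ i, x i * D.mulVec v i) = dotProduct x (D.mulVec v) := rfl
    _ = dotProduct (Matrix.vecMul x D) v := Matrix.dotProduct_mulVec x D v
    _ = ∑ i, (D.transpose.mulVec x) i * v i := by rw [← Matrix.mulVec_transpose]; rfl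

end FourierAux

/-- For `F(z) = Σ_y f̂_y²(Dy + z)` one has `F̂(x) = f̂_x²(Dᵀx)`; in particular `F̂ ≥ 0`,
so `F` attains its maximum at `z = 0`. -/
theorem fourier_of_sum_sq_deriv {n : ℕ} (f : (Fin n → ZMod 2) → ℝ)
    (hf : ∀ x, f x = 1 ∨ f x = -1) (D : Matrix (Fin n) (Fin n) (ZMod 2))
    (F : (Fin n → ZMod 2) → ℝ)
    (hF : ∀ z, F z = ∑ y : Fin n → ZMod 2, fCoeff (dderiv f y) (D.mulVec y + z) ^ 2) :
    (∀ x, fCoeff F x = fCoeff (dderiv f x) (D.transpose.mulVec x) ^ 2) ∧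
    (∀ x, 0 ≤ fCoeff F x) ∧
    (∀ z, F z ≤ F 0) := by
  have key : ∀ x, fCoeff F x = fCoeff (dderiv f x) (D.transpose.mulVec x) ^ 2 := by
    intro x
    have hz : ∀ y : Fin n → ZMod 2,
        (∑ z : Fin n → ZMod 2, fCoeff (dderiv f y) (D.mulVec y + z) ^ 2 * chi x z)
        = chi x (D.mulVec y) *
            ((∑ a : Fin n → ZMod 2, dderiv f y a * dderiv f y (a + x)) / 2^n) := by
      intro y
      have reidx : (∑ z : Fin n → ZMod 2, fCoeff (dderiv f y) (D.mulVec y + z) ^ 2 * chi x z)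
          = ∑ w : Fin n → ZMod 2,
              fCoeff (dderiv f y) (D.mulVec y + (D.mulVec y + w)) ^ 2
                * chi x (D.mulVec y + w) :=
        (Fintype.sum_equiv (Equiv.addLeft (D.mulVec y)) _ _ (fun w => rfl)).symm
      rw [reidx]
      have hterm : ∀ w : Fin n → ZMod 2,
          fCoeff (dderiv f y) (D.mulVec y + (D.mulVec y + w)) ^ 2 * chi x (D.mulVec y + w)
          = chi x (D.mulVec y) * (fCoeff (dderiv f y) w ^ 2 * chi x w) := by
        intro w
        rw [show D.mulVec y + (D.mulVec y + w) = w from by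
            rw [← add_assoc, vadd_self, zero_add], chi_add_right]
        ring
      simp only [hterm]
      rw [← Finset.mul_sum, sum_coeff_sq_mul_chi]
    have step1 : fCoeff F x
        = (∑ y : Fin n → ZMod 2, chi x (D.mulVec y) *
            ((∑ a : Fin n → ZMod 2, dderiv f y a * dderiv f y (a + x)) / 2^n)) / 2^n := by
      rw [fCoeff]
      congr 1
      rw [show (∑ z : Fin n → ZMod 2, F z * chi x z)
          = ∑ z : Fin n → ZMod 2, ∑ y : Fin n → ZMod 2,
              fCoeff (dderiv f y) (D.mulVec y + z) ^ 2 * chi x z from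
        Finset.sum_congr rfl fun z _ => by rw [hF z, Finset.sum_mul]]
      rw [Finset.sum_comm]
      exact Finset.sum_congr rfl fun y _ => hz y
    have step2 : fCoeff F x
        = (∑ y : Fin n → ZMod 2, ∑ a : Fin n → ZMod 2,
            chi x (D.mulVec y) * (dderiv f y a * dderiv f y (a + x)))
          / ((2:ℝ)^n * 2^n) := by
      rw [step1]
      rw [show (∑ y : Fin n → ZMod 2, chi x (D.mulVec y) *
            ((∑ a : Fin n → ZMod 2, dderiv f y a * dderiv f y (a + x)) / 2^n))
          = ∑ y : Fin n → ZMod 2, (∑ a : Fin n → ZMod 2,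
              chi x (D.mulVec y) * (dderiv f y a * dderiv f y (a + x))) / 2^n from
        Finset.sum_congr rfl fun y _ => by
          rw [← mul_div_assoc, Finset.mul_sum]]
      rw [← Finset.sum_div, div_div]
    have claim : (∑ y : Fin n → ZMod 2, ∑ a : Fin n → ZMod 2,
          chi x (D.mulVec y) * (dderiv f y a * dderiv f y (a + x)))
        = (∑ a : Fin n → ZMod 2, dderiv f x a * chi (D.transpose.mulVec x) a)
          * (∑ a : Fin n → ZMod 2, dderiv f x a * chi (D.transpose.mulVec x) a) := by
      rw [Finset.sum_comm, Finset.sum_mul_sum]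
      refine Finset.sum_congr rfl fun a _ => ?_
      refine Eq.symm (Fintype.sum_equiv (Equiv.addLeft a) _ _ fun b => ?_)
      show dderiv f x a * chi (D.transpose.mulVec x) a
            * (dderiv f x b * chi (D.transpose.mulVec x) b)
          = chi x (D.mulVec (a + b)) * (dderiv f (a + b) a * dderiv f (a + b) (a + x))
      simp only [dderiv]
      rw [show a + (a + b) = b from by rw [← add_assoc, vadd_self, zero_add],
        show a + x + (a + b) = b + x from by
          rw [show a + x + (a + b) = (a + a) + (b + x) from by ring, vadd_self, zero_add],
        Matrix.mulVec_add, chi_add_right, chi_mulVec, chi_mulVec]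
      ring
    rw [step2, claim, fCoeff, sq, div_mul_div_comm]
  refine ⟨key, fun x => ?_, fun z => ?_⟩
  · rw [key]; exact sq_nonneg _
  · have hnn : ∀ x, 0 ≤ fCoeff F x := fun x => by rw [key]; exact sq_nonneg _
    calc F z = ∑ x : Fin n → ZMod 2, fCoeff F x * chi x z :=
          (fourier_inversion F z).symm
      _ ≤ ∑ x : Fin n → ZMod 2, fCoeff F x := by
          refine Finset.sum_le_sum fun x _ => ?_
          calc fCoeff F x * chi x z ≤ fCoeff F x * 1 :=
                mul_le_mul_of_nonneg_left (chi_le_one x z) (hnn x)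
            _ = fCoeff F x := mul_one _
      _ = ∑ x : Fin n → ZMod 2, fCoeff F x * chi x 0 := by
          simp [chi_zero_right]
      _ = F 0 := fourier_inversion F 0
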